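/- arXiv:1612.02811 — 5 statements merged into one kernel-verified Lean document; each statement's English description precedes it below -/
import Mathlib

section
/- For the amplification factor C = (1 - i c √(ρk) Z + a ρ k (Z²-1))/(1 - â k) with Z a standard normal random variable, a = -sin²(γh)/(2h²), â = -2sin²(γh/2)/h², c = sin(γh)/h, the condition E[|C|²] < 1 holds for all wave numbers γ ∈ (-π/h, π/h)\{0} and all k,h > 0 if and only if 0 < ρ ≤ 1/√2. In particular, the implicit Milstein scheme is unconditionally mean-square stable provided 0 < ρ ≤ 1/√2. -/
open MeasureTheory ProbabilityTheory Real Filter Topology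
open scoped ENNReal NNReal

namespace MilsteinAux

lemma abs_pow_le_aux (n : ℕ) (x : ℝ) :
    |x| ^ n ≤ (1 + 4 ^ n * n.factorial) * Real.exp (x ^ 2 / 4) := by
  have h1 : (x ^ 2 / 4) ^ n / n.factorial ≤ Real.exp (x ^ 2 / 4) :=
    Real.pow_div_factorial_le_exp (x := x ^ 2 / 4) (by positivity) n
  have hfac : (0:ℝ) < n.factorial := by exact_mod_cast n.factorial_pos
  have h2 : (x ^ 2) ^ n ≤ 4 ^ n * n.factorial * Real.exp (x ^ 2 / 4) := by
    have := (div_le_iff₀ hfac).mp h1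
    calc (x ^ 2) ^ n = 4 ^ n * (x ^ 2 / 4) ^ n := by
          rw [div_pow, ← mul_div_assoc]
          field_simp
      _ ≤ 4 ^ n * (n.factorial * Real.exp (x ^ 2 / 4)) := by
          apply mul_le_mul_of_nonneg_left (by linarith) (by positivity)
      _ = 4 ^ n * n.factorial * Real.exp (x ^ 2 / 4) := by ring
  have h3 : |x| ^ n ≤ 1 + (x ^ 2) ^ n := by
    rcases le_or_gt |x| 1 with hx | hx
    · have h6 : |x| ^ n ≤ 1 := pow_le_one₀ (abs_nonneg x) hx
      have : (0:ℝ) ≤ (x ^ 2) ^ n := by positivity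
      linarith
    · have h4 : |x| ^ n ≤ (|x| ^ n) ^ 2 := by
        have h5 : 1 ≤ |x| ^ n := one_le_pow₀ hx.le
        nlinarith
      have : (|x| ^ n) ^ 2 = (x ^ 2) ^ n := by
        rw [← pow_mul, mul_comm, pow_mul, sq_abs]
      nlinarith
  have hexp1 : (1:ℝ) ≤ Real.exp (x ^ 2 / 4) := Real.one_le_exp (by positivity)
  have h4n : (0:ℝ) ≤ 4 ^ n * n.factorial := by positivity
  calc |x| ^ n ≤ 1 + (x ^ 2) ^ n := h3
    _ ≤ 1 * Real.exp (x^2/4) + 4 ^ n * n.factorial * Real.exp (x ^ 2 / 4) := by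
        nlinarith
    _ = (1 + 4 ^ n * n.factorial) * Real.exp (x ^ 2 / 4) := by ring

lemma integrable_pow_gauss (n : ℕ) :
    Integrable (fun x : ℝ => x ^ n * Real.exp (-x ^ 2 / 2)) := by
  have hint : Integrable (fun x : ℝ => ((1:ℝ) + 4 ^ n * n.factorial) * Real.exp (-(1/4) * x ^ 2)) :=
    (integrable_exp_neg_mul_sq (by norm_num)).const_mul _
  refine hint.mono' ?_ ?_
  · exact ((continuous_pow n).mul ((continuous_pow 2).neg.div_const 2).rexp).aestronglyMeasurable
  · filter_upwards with x
    have hb := abs_pow_le_aux n x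
    rw [Real.norm_eq_abs, abs_mul, abs_pow, Real.abs_exp]
    calc |x| ^ n * Real.exp (-x ^ 2 / 2)
        ≤ ((1 + 4 ^ n * n.factorial) * Real.exp (x ^ 2 / 4)) * Real.exp (-x ^ 2 / 2) := by
          exact mul_le_mul_of_nonneg_right hb (Real.exp_pos _).le
      _ = (1 + 4 ^ n * n.factorial) * Real.exp (-(1/4)*x^2) := by
          rw [mul_assoc, ← Real.exp_add]; ring_nf


lemma pow_gauss_bound (k : ℕ) (x : ℝ) :
    ‖x ^ k * Real.exp (-x ^ 2 / 2)‖ ≤ (1 + 4 ^ k * k.factorial) * Real.exp (-x ^ 2 / 4) := by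
  rw [Real.norm_eq_abs, abs_mul, abs_pow, Real.abs_exp]
  calc |x| ^ k * Real.exp (-x ^ 2 / 2)
      ≤ ((1 + 4 ^ k * k.factorial) * Real.exp (x ^ 2 / 4)) * Real.exp (-x ^ 2 / 2) :=
        mul_le_mul_of_nonneg_right (abs_pow_le_aux k x) (Real.exp_pos _).le
    _ = (1 + 4 ^ k * k.factorial) * Real.exp (-x ^ 2 / 4) := by
        rw [mul_assoc, ← Real.exp_add]; ring_nf

lemma tendsto_gauss_decay_atTop (k : ℕ) :
    Tendsto (fun x : ℝ => x ^ k * Real.exp (-x ^ 2 / 2)) atTop (𝓝 0) := by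
  have h1 : Tendsto (fun x : ℝ => x ^ 2 / 4) atTop atTop :=
    (tendsto_pow_atTop two_ne_zero).atTop_div_const (by norm_num)
  have h2 : Tendsto (fun x : ℝ => Real.exp (-(x ^ 2 / 4))) atTop (𝓝 0) :=
    Real.tendsto_exp_neg_atTop_nhds_zero.comp h1
  have h3 : Tendsto (fun x : ℝ => (1 + 4 ^ k * (k.factorial:ℝ)) * Real.exp (-(x ^ 2 / 4)))
      atTop (𝓝 0) := by simpa using h2.const_mul ((1:ℝ) + 4 ^ k * k.factorial)
  refine squeeze_zero_norm (fun x => ?_) h3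
  simpa [neg_div] using pow_gauss_bound k x

lemma tendsto_gauss_decay_atBot (k : ℕ) :
    Tendsto (fun x : ℝ => x ^ k * Real.exp (-x ^ 2 / 2)) atBot (𝓝 0) := by
  have h0 : Tendsto (fun x : ℝ => x ^ 2) atBot atTop := by
    have habs : Tendsto (fun x : ℝ => |x|) atBot atTop := tendsto_abs_atBot_atTop
    have := (tendsto_pow_atTop (α := ℝ) (n := 2) two_ne_zero).comp habs
    simpa [Function.comp_def, sq_abs] using this
  have h1 : Tendsto (fun x : ℝ => x ^ 2 / 4) atBot atTop := h0.atTop_div_const (by norm_num)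
  have h2 : Tendsto (fun x : ℝ => Real.exp (-(x ^ 2 / 4))) atBot (𝓝 0) :=
    Real.tendsto_exp_neg_atTop_nhds_zero.comp h1
  have h3 : Tendsto (fun x : ℝ => (1 + 4 ^ k * (k.factorial:ℝ)) * Real.exp (-(x ^ 2 / 4)))
      atBot (𝓝 0) := by simpa using h2.const_mul ((1:ℝ) + 4 ^ k * k.factorial)
  refine squeeze_zero_norm (fun x => ?_) h3
  simpa [neg_div] using pow_gauss_bound k x

lemma integral_deriv_zero (F f : ℝ → ℝ) (hd : ∀ x, HasDerivAt F (f x) x)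
    (hi : Integrable f) (ht : Tendsto F atTop (𝓝 0)) (hb : Tendsto F atBot (𝓝 0)) :
    ∫ x, f x = 0 := by
  have h1 : ∫ x in Set.Ioi (0:ℝ), f x = 0 - F 0 :=
    MeasureTheory.integral_Ioi_of_hasDerivAt_of_tendsto' (fun x _ => hd x) hi.integrableOn ht
  have h2 : ∫ x in Set.Iic (0:ℝ), f x = F 0 - 0 :=
    MeasureTheory.integral_Iic_of_hasDerivAt_of_tendsto' (fun x _ => hd x) hi.integrableOn hb
  have h3 := intervalIntegral.integral_Iic_add_Ioi (b := (0:ℝ)) (f := f) (μ := volume)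
    hi.integrableOn hi.integrableOn
  rw [h1, h2] at h3
  linarith [h3.symm]

lemma hasDerivAt_gauss (x : ℝ) :
    HasDerivAt (fun y : ℝ => Real.exp (-y ^ 2 / 2)) (Real.exp (-x ^ 2 / 2) * (-x)) x := by
  have h : HasDerivAt (fun y : ℝ => -y ^ 2 / 2) (-x) x := by
    have := ((hasDerivAt_pow 2 x).neg).div_const 2
    refine this.congr_deriv ?_
    simp
    ring
  exact h.exp

lemma J0 : ∫ x : ℝ, Real.exp (-x ^ 2 / 2) = Real.sqrt (2 * π) := by
  have h := integral_gaussian (1/2)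
  rw [show π / (1/2 : ℝ) = 2 * π by ring] at h
  rw [← h]
  congr 1 with x
  congr 1
  ring

lemma J2 : ∫ x : ℝ, x ^ 2 * Real.exp (-x ^ 2 / 2) = Real.sqrt (2 * π) := by
  have hd : ∀ x : ℝ, HasDerivAt (fun y : ℝ => y * Real.exp (-y ^ 2 / 2))
      (Real.exp (-x ^ 2 / 2) - x ^ 2 * Real.exp (-x ^ 2 / 2)) x := by
    intro x
    have := (hasDerivAt_id x).mul (hasDerivAt_gauss x)
    refine this.congr_deriv ?_
    simp [id]
    ring
  have hi : Integrable (fun x : ℝ => Real.exp (-x ^ 2 / 2) - x ^ 2 * Real.exp (-x ^ 2 / 2)) := by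
    have h0 := integrable_pow_gauss 0
    simp only [pow_zero, one_mul] at h0
    exact h0.sub (integrable_pow_gauss 2)
  have ht := tendsto_gauss_decay_atTop 1
  have hb := tendsto_gauss_decay_atBot 1
  simp only [pow_one] at ht hb
  have h := integral_deriv_zero _ _ hd hi ht hb
  have h0 := integrable_pow_gauss 0
  simp only [pow_zero, one_mul] at h0
  rw [MeasureTheory.integral_sub h0 (integrable_pow_gauss 2)] at h
  rw [← J0]
  linarith

lemma J4 : ∫ x : ℝ, x ^ 4 * Real.exp (-x ^ 2 / 2) = 3 * Real.sqrt (2 * π) := by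
  have hd : ∀ x : ℝ, HasDerivAt (fun y : ℝ => y ^ 3 * Real.exp (-y ^ 2 / 2))
      (3 * (x ^ 2 * Real.exp (-x ^ 2 / 2)) - x ^ 4 * Real.exp (-x ^ 2 / 2)) x := by
    intro x
    have := (hasDerivAt_pow 3 x).mul (hasDerivAt_gauss x)
    refine this.congr_deriv ?_
    simp
    ring
  have hi : Integrable (fun x : ℝ =>
      3 * (x ^ 2 * Real.exp (-x ^ 2 / 2)) - x ^ 4 * Real.exp (-x ^ 2 / 2)) :=
    ((integrable_pow_gauss 2).const_mul 3).sub (integrable_pow_gauss 4)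
  have h := integral_deriv_zero _ _ hd hi (tendsto_gauss_decay_atTop 3) (tendsto_gauss_decay_atBot 3)
  rw [MeasureTheory.integral_sub ((integrable_pow_gauss 2).const_mul 3) (integrable_pow_gauss 4),
    MeasureTheory.integral_const_mul, J2] at h
  linarith


lemma meas_pdf : Measurable (fun x : ℝ => (gaussianPDFReal 0 1 x).toNNReal) :=
  (measurable_gaussianPDFReal 0 1).real_toNNReal

lemma gaussianReal_eq_withDensity :
    gaussianReal 0 1 = volume.withDensity (fun x => ((gaussianPDFReal 0 1 x).toNNReal : ℝ≥0∞)) := by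
  rw [gaussianReal_of_var_ne_zero 0 one_ne_zero]
  rfl

lemma pdf01 (x : ℝ) : gaussianPDFReal 0 1 x = (Real.sqrt (2 * π))⁻¹ * Real.exp (-x ^ 2 / 2) := by
  simp [gaussianPDFReal]

lemma integral_gaussianReal01 (g : ℝ → ℝ) :
    ∫ x, g x ∂(gaussianReal 0 1) = ∫ x, (Real.sqrt (2 * π))⁻¹ * (g x * Real.exp (-x ^ 2 / 2)) := by
  rw [gaussianReal_eq_withDensity, integral_withDensity_eq_integral_smul meas_pdf g]
  congr 1 with x
  rw [NNReal.smul_def, Real.coe_toNNReal _ (gaussianPDFReal_nonneg 0 1 x), pdf01, smul_eq_mul]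
  ring

lemma integrable_pow_gaussianReal (n : ℕ) :
    Integrable (fun x : ℝ => x ^ n) (gaussianReal 0 1) := by
  rw [gaussianReal_eq_withDensity, integrable_withDensity_iff_integrable_smul meas_pdf]
  have h : (fun x : ℝ => (gaussianPDFReal 0 1 x).toNNReal • x ^ n)
      = fun x : ℝ => (Real.sqrt (2 * π))⁻¹ * (x ^ n * Real.exp (-x ^ 2 / 2)) := by
    funext x
    rw [NNReal.smul_def, Real.coe_toNNReal _ (gaussianPDFReal_nonneg 0 1 x), pdf01, smul_eq_mul]
    ring
  rw [h]
  exact (integrable_pow_gauss n).const_mul _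

lemma sqrt2pi_ne : Real.sqrt (2 * π) ≠ 0 :=
  ne_of_gt (Real.sqrt_pos.mpr (by positivity))

lemma moment2 : ∫ x, x ^ 2 ∂(gaussianReal 0 1) = 1 := by
  rw [integral_gaussianReal01, MeasureTheory.integral_const_mul, J2]
  exact inv_mul_cancel₀ sqrt2pi_ne

lemma moment4 : ∫ x, x ^ 4 ∂(gaussianReal 0 1) = 3 := by
  rw [integral_gaussianReal01, MeasureTheory.integral_const_mul, J4]
  field_simp

lemma integral_quartic (c0 c2 c4 : ℝ) :
    ∫ z, (c0 + c2 * z ^ 2 + c4 * z ^ 4) ∂(gaussianReal 0 1) = c0 + c2 + 3 * c4 := by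
  have i2 : Integrable (fun z : ℝ => c2 * z ^ 2) (gaussianReal 0 1) :=
    (integrable_pow_gaussianReal 2).const_mul c2
  have i4 : Integrable (fun z : ℝ => c4 * z ^ 4) (gaussianReal 0 1) :=
    (integrable_pow_gaussianReal 4).const_mul c4
  have i0 : Integrable (fun _ : ℝ => c0) (gaussianReal 0 1) := integrable_const _
  have e1 : ∫ z, (c0 + c2 * z ^ 2 + c4 * z ^ 4) ∂(gaussianReal 0 1)
      = (∫ z, (c0 + c2 * z ^ 2) ∂(gaussianReal 0 1)) + ∫ z, c4 * z ^ 4 ∂(gaussianReal 0 1) :=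
    MeasureTheory.integral_add (i0.add i2) i4
  have e2 : ∫ z, (c0 + c2 * z ^ 2) ∂(gaussianReal 0 1)
      = (∫ _z : ℝ, c0 ∂(gaussianReal 0 1)) + ∫ z, c2 * z ^ 2 ∂(gaussianReal 0 1) :=
    MeasureTheory.integral_add i0 i2
  rw [e1, e2, MeasureTheory.integral_const_mul, MeasureTheory.integral_const_mul, moment2, moment4,
    MeasureTheory.integral_const]
  simp
  ring


lemma abs_sq_eq (x y D : ℝ) :
    (norm (((x : ℂ) - (y : ℂ) * Complex.I) / (D : ℂ))) ^ 2 = (x ^ 2 + y ^ 2) / D ^ 2 := by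
  rw [norm_div, Complex.norm_real, div_pow, Complex.sq_norm, Real.norm_eq_abs, sq_abs]
  congr 1
  simp [Complex.normSq_apply]
  ring

lemma formula (ρ h k γ : ℝ) (hρk : 0 ≤ ρ * k) :
    (∫ z : ℝ,
        (norm
          (((1 : ℂ)
              - Complex.I * ((Real.sin (γ * h) / h : ℝ) : ℂ)
                  * ((Real.sqrt (ρ * k) : ℝ) : ℂ) * (z : ℂ)
              + ((-(Real.sin (γ * h))^2 / (2 * h^2) : ℝ) : ℂ) * (ρ : ℂ) * (k : ℂ)
                  * ((z : ℂ)^2 - 1))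
            / ((1 : ℂ) - ((-2 * (Real.sin (γ * h / 2))^2 / h^2 : ℝ) : ℂ) * (k : ℂ))))^2
        ∂(gaussianReal 0 1))
    = (1 + 2 * (-(Real.sin (γ * h))^2 / (2 * h^2) * ρ * k)^2
        + (Real.sin (γ * h) / h)^2 * (ρ * k))
      / (1 - (-2 * (Real.sin (γ * h / 2))^2 / h^2) * k)^2 := by
  have hs : Real.sqrt (ρ * k) ^ 2 = ρ * k := Real.sq_sqrt hρk
  have hpt : ∀ z : ℝ,
      (norm
          (((1 : ℂ)
              - Complex.I * ((Real.sin (γ * h) / h : ℝ) : ℂ)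
                  * ((Real.sqrt (ρ * k) : ℝ) : ℂ) * (z : ℂ)
              + ((-(Real.sin (γ * h))^2 / (2 * h^2) : ℝ) : ℂ) * (ρ : ℂ) * (k : ℂ)
                  * ((z : ℂ)^2 - 1))
            / ((1 : ℂ) - ((-2 * (Real.sin (γ * h / 2))^2 / h^2 : ℝ) : ℂ) * (k : ℂ))))^2
      = (1 - (-(Real.sin (γ * h))^2 / (2 * h^2) * ρ * k))^2
          / (1 - (-2 * (Real.sin (γ * h / 2))^2 / h^2) * k)^2
        + (2 * (-(Real.sin (γ * h))^2 / (2 * h^2) * ρ * k)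
              * (1 - (-(Real.sin (γ * h))^2 / (2 * h^2) * ρ * k))
            + (Real.sin (γ * h) / h)^2 * (ρ * k))
          / (1 - (-2 * (Real.sin (γ * h / 2))^2 / h^2) * k)^2 * z ^ 2
        + (-(Real.sin (γ * h))^2 / (2 * h^2) * ρ * k)^2
          / (1 - (-2 * (Real.sin (γ * h / 2))^2 / h^2) * k)^2 * z ^ 4 := by
    intro z
    have hform :
        ((1 : ℂ)
              - Complex.I * ((Real.sin (γ * h) / h : ℝ) : ℂ)
                  * ((Real.sqrt (ρ * k) : ℝ) : ℂ) * (z : ℂ)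
              + ((-(Real.sin (γ * h))^2 / (2 * h^2) : ℝ) : ℂ) * (ρ : ℂ) * (k : ℂ)
                  * ((z : ℂ)^2 - 1))
            / ((1 : ℂ) - ((-2 * (Real.sin (γ * h / 2))^2 / h^2 : ℝ) : ℂ) * (k : ℂ))
        = (((1 + (-(Real.sin (γ * h))^2 / (2 * h^2) * ρ * k) * (z ^ 2 - 1) : ℝ) : ℂ)
            - ((Real.sin (γ * h) / h * Real.sqrt (ρ * k) * z : ℝ) : ℂ) * Complex.I)
          / (((1 - (-2 * (Real.sin (γ * h / 2))^2 / h^2) * k : ℝ)) : ℂ) := by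
      push_cast
      ring
    rw [hform, abs_sq_eq]
    have hy : (Real.sin (γ * h) / h * Real.sqrt (ρ * k) * z) ^ 2
        = (Real.sin (γ * h) / h) ^ 2 * (ρ * k) * z ^ 2 := by
      rw [mul_pow, mul_pow, hs]
    rw [hy]
    ring
  calc (∫ z : ℝ,
        (norm
          (((1 : ℂ)
              - Complex.I * ((Real.sin (γ * h) / h : ℝ) : ℂ)
                  * ((Real.sqrt (ρ * k) : ℝ) : ℂ) * (z : ℂ)
              + ((-(Real.sin (γ * h))^2 / (2 * h^2) : ℝ) : ℂ) * (ρ : ℂ) * (k : ℂ)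
                  * ((z : ℂ)^2 - 1))
            / ((1 : ℂ) - ((-2 * (Real.sin (γ * h / 2))^2 / h^2 : ℝ) : ℂ) * (k : ℂ))))^2
        ∂(gaussianReal 0 1))
      = ∫ z : ℝ,
          ((1 - (-(Real.sin (γ * h))^2 / (2 * h^2) * ρ * k))^2
          / (1 - (-2 * (Real.sin (γ * h / 2))^2 / h^2) * k)^2
        + (2 * (-(Real.sin (γ * h))^2 / (2 * h^2) * ρ * k)
              * (1 - (-(Real.sin (γ * h))^2 / (2 * h^2) * ρ * k))
            + (Real.sin (γ * h) / h)^2 * (ρ * k))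
          / (1 - (-2 * (Real.sin (γ * h / 2))^2 / h^2) * k)^2 * z ^ 2
        + (-(Real.sin (γ * h))^2 / (2 * h^2) * ρ * k)^2
          / (1 - (-2 * (Real.sin (γ * h / 2))^2 / h^2) * k)^2 * z ^ 4) ∂(gaussianReal 0 1) := by
        congr 1
        funext z
        exact hpt z
    _ = _ := by
        rw [integral_quartic]
        ring


lemma sin_sq_double (x : ℝ) :
    Real.sin x ^ 2 = 4 * Real.sin (x / 2) ^ 2 * (1 - Real.sin (x / 2) ^ 2) := by
  have h1 : Real.sin x = 2 * Real.sin (x / 2) * Real.cos (x / 2) := by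
    conv_lhs => rw [show x = 2 * (x / 2) by ring, Real.sin_two_mul]
  have h2 := Real.sin_sq_add_cos_sq (x / 2)
  have h3 : Real.cos (x / 2) ^ 2 = 1 - Real.sin (x / 2) ^ 2 := by linarith
  calc Real.sin x ^ 2 = 4 * Real.sin (x / 2) ^ 2 * Real.cos (x / 2) ^ 2 := by rw [h1]; ring
    _ = 4 * Real.sin (x / 2) ^ 2 * (1 - Real.sin (x / 2) ^ 2) := by rw [h3]

lemma ineq_bwd (ρ u K : ℝ) (hρ0 : 0 < ρ) (hρ1 : ρ < 1) (h2 : 2 * ρ ^ 2 ≤ 1)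
    (hu0 : 0 < u) (hu1 : u < 1) (hK : 0 < K) :
    1 + 2 * (-(4 * u * (1 - u)) / 2 * ρ * K) ^ 2 + 4 * u * (1 - u) * (ρ * K)
      < (1 + 2 * u * K) ^ 2 := by
  have h1 : 0 < 1 - (1 - u) * ρ := by nlinarith
  have h2' : 0 ≤ 1 - 2 * ((1 - u) * ρ) ^ 2 := by nlinarith [sq_nonneg (1 - u)]
  have t1 : 0 < u * K * (1 - (1 - u) * ρ) := by positivity
  have t2 : 0 ≤ u ^ 2 * K ^ 2 * (1 - 2 * ((1 - u) * ρ) ^ 2) := by positivity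
  nlinarith [t1, t2]

lemma bwd_final (ρ h k s t : ℝ) (hst : s ^ 2 = 4 * t ^ 2 * (1 - t ^ 2))
    (hh : 0 < h) (hk : 0 < k) (hρ0 : 0 < ρ) (hρ1 : ρ < 1) (h2 : 2 * ρ ^ 2 ≤ 1)
    (hu0 : 0 < t ^ 2) (hu1 : t ^ 2 < 1) :
    (1 + 2 * (-s ^ 2 / (2 * h ^ 2) * ρ * k) ^ 2 + (s / h) ^ 2 * (ρ * k))
      / (1 - -2 * t ^ 2 / h ^ 2 * k) ^ 2 < 1 := by
  have hh2 : (0:ℝ) < h ^ 2 := by positivity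
  have hD : 0 < 1 - -2 * t ^ 2 / h ^ 2 * k := by
    have heq : 1 - -2 * t ^ 2 / h ^ 2 * k = 1 + 2 * t ^ 2 / h ^ 2 * k := by ring
    rw [heq]; positivity
  rw [div_lt_one (by positivity)]
  have key := ineq_bwd ρ (t ^ 2) (k / h ^ 2) hρ0 hρ1 h2 hu0 hu1 (by positivity)
  have eL : 1 + 2 * (-s ^ 2 / (2 * h ^ 2) * ρ * k) ^ 2 + (s / h) ^ 2 * (ρ * k)
      = 1 + 2 * (-(4 * t ^ 2 * (1 - t ^ 2)) / 2 * ρ * (k / h ^ 2)) ^ 2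
        + 4 * t ^ 2 * (1 - t ^ 2) * (ρ * (k / h ^ 2)) := by
    rw [div_pow, hst]; field_simp
  have eR : (1 - -2 * t ^ 2 / h ^ 2 * k) ^ 2 = (1 + 2 * t ^ 2 * (k / h ^ 2)) ^ 2 := by
    field_simp
    ring
  rw [eL, eR]
  exact key

lemma fwd_final (ρ k s t : ℝ) (hst : s ^ 2 = 4 * t ^ 2 * (1 - t ^ 2))
    (hρ0 : 0 < ρ) (hρ1 : ρ < 1) (hu0 : 0 < t ^ 2) (hu1 : t ^ 2 < 1)
    (hco : 0 < 2 * (1 - t ^ 2) ^ 2 * ρ ^ 2 - 1)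
    (hk : k = 1 / (t ^ 2 * (2 * (1 - t ^ 2) ^ 2 * ρ ^ 2 - 1))) :
    1 ≤ (1 + 2 * (-s ^ 2 / (2 * 1 ^ 2) * ρ * k) ^ 2 + (s / 1) ^ 2 * (ρ * k))
      / (1 - -2 * t ^ 2 / 1 ^ 2 * k) ^ 2 := by
  have hk0 : 0 < k := by rw [hk]; positivity
  have hD : 0 < 1 - -2 * t ^ 2 / 1 ^ 2 * k := by
    have heq : 1 - -2 * t ^ 2 / 1 ^ 2 * k = 1 + 2 * t ^ 2 / 1 ^ 2 * k := by ring
    rw [heq]; positivity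
  rw [le_div_iff₀ (by positivity)]
  have huk : t ^ 2 * k * (2 * (1 - t ^ 2) ^ 2 * ρ ^ 2 - 1) = 1 := by
    rw [hk]; field_simp
    exact div_self (by rintro rfl; simp at hu0)
  have expand : 1 + 2 * (-s ^ 2 / (2 * 1 ^ 2) * ρ * k) ^ 2 + (s / 1) ^ 2 * (ρ * k)
      - (1 - -2 * t ^ 2 / 1 ^ 2 * k) ^ 2 * 1
      = 4 * t ^ 2 * (1 - t ^ 2) * ρ * k
        + 4 * t ^ 2 * k * (t ^ 2 * k * (2 * (1 - t ^ 2) ^ 2 * ρ ^ 2 - 1) - 1) := by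
    rw [div_one, hst]; ring
  have hpos : 0 ≤ 4 * t ^ 2 * (1 - t ^ 2) * ρ * k := by
    have : 0 ≤ 1 - t ^ 2 := by linarith
    positivity
  have h5 : t ^ 2 * k * (2 * (1 - t ^ 2) ^ 2 * ρ ^ 2 - 1) - 1 = 0 := by rw [huk]; ring
  have h6 : 4 * t ^ 2 * k * (t ^ 2 * k * (2 * (1 - t ^ 2) ^ 2 * ρ ^ 2 - 1) - 1) = 0 := by
    rw [h5]; ring
  linarith [expand, h6, hpos]

end MilsteinAux

open MilsteinAux in
/-- the implicit Milstein amplification factor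
`C = (1 - i c √(ρk) Z + a ρ k (Z²-1))/(1 - â k)` with `Z ~ N(0,1)` satisfies
`E[|C|²] < 1` for all admissible wave numbers and all mesh parameters
if and only if `0 < ρ ≤ 1/√2` (unconditional mean-square stability). -/
theorem stmt_0 (ρ : ℝ) (hρ0 : 0 < ρ) (hρ1 : ρ < 1) :
    (∀ h k γ : ℝ, 0 < h → 0 < k → γ ≠ 0 → |γ * h| < Real.pi →
      (∫ z : ℝ,
        (norm
          (((1 : ℂ)
              - Complex.I * ((Real.sin (γ * h) / h : ℝ) : ℂ)
                  * ((Real.sqrt (ρ * k) : ℝ) : ℂ) * (z : ℂ)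
              + ((-(Real.sin (γ * h))^2 / (2 * h^2) : ℝ) : ℂ) * (ρ : ℂ) * (k : ℂ)
                  * ((z : ℂ)^2 - 1))
            / ((1 : ℂ) - ((-2 * (Real.sin (γ * h / 2))^2 / h^2 : ℝ) : ℂ) * (k : ℂ))))^2
        ∂(gaussianReal 0 1)) < 1)
    ↔ ρ ≤ 1 / Real.sqrt 2 := by
  have hs2pos : (0:ℝ) < Real.sqrt 2 := Real.sqrt_pos.mpr (by norm_num)
  have hsq2 : Real.sqrt 2 ^ 2 = 2 := Real.sq_sqrt (by norm_num)
  have hiff : ρ ≤ 1 / Real.sqrt 2 ↔ 2 * ρ ^ 2 ≤ 1 := by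
    rw [le_div_iff₀ hs2pos]
    constructor
    · intro hle
      nlinarith [mul_nonneg hρ0.le hs2pos.le]
    · intro hle
      nlinarith [sq_nonneg (ρ * Real.sqrt 2 - 1)]
  rw [hiff]
  constructor
  · -- forward
    intro hall
    by_contra hgt
    push_neg at hgt
    set ε := (2 * ρ ^ 2 - 1) / (4 * ρ ^ 2) with hε_def
    have hε : 0 < ε := by apply div_pos <;> nlinarith
    have hεmul : 4 * ρ ^ 2 * ε = 2 * ρ ^ 2 - 1 := by
      rw [hε_def]; field_simp
    set γ0 := min 1 (Real.sqrt ε) with hγ0_def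
    have hγ0pos : 0 < γ0 := lt_min one_pos (Real.sqrt_pos.mpr hε)
    have hγ0le1 : γ0 ≤ 1 := min_le_left _ _
    have hγ0sq : γ0 ^ 2 ≤ ε := by
      have h1 : γ0 ≤ Real.sqrt ε := min_le_right _ _
      nlinarith [Real.sq_sqrt hε.le, hγ0pos]
    have hπ3 := Real.pi_gt_three
    have hx : 0 < γ0 * 1 / 2 := by linarith
    have hxlt : γ0 * 1 / 2 < π := by nlinarith
    have htpos : 0 < Real.sin (γ0 * 1 / 2) := Real.sin_pos_of_pos_of_lt_pi hx hxlt
    have htlt : Real.sin (γ0 * 1 / 2) < γ0 * 1 / 2 := Real.sin_lt hx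
    have hu0 : 0 < Real.sin (γ0 * 1 / 2) ^ 2 := by positivity
    have hu_lt : Real.sin (γ0 * 1 / 2) ^ 2 ≤ ε / 4 := by nlinarith
    have hu1 : Real.sin (γ0 * 1 / 2) ^ 2 < 1 := by nlinarith
    have hco : 0 < 2 * (1 - Real.sin (γ0 * 1 / 2) ^ 2) ^ 2 * ρ ^ 2 - 1 := by
      have h7 : Real.sin (γ0 * 1 / 2) ^ 2 * ρ ^ 2 ≤ ε / 4 * ρ ^ 2 := by nlinarith
      nlinarith [sq_nonneg (Real.sin (γ0 * 1 / 2) ^ 2 * ρ)]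
    set k0 := 1 / (Real.sin (γ0 * 1 / 2) ^ 2 * (2 * (1 - Real.sin (γ0 * 1 / 2) ^ 2) ^ 2 * ρ ^ 2 - 1))
      with hk0_def
    have hk0 : 0 < k0 := by
      rw [hk0_def]
      exact one_div_pos.mpr (mul_pos hu0 hco)
    have hγπ : |γ0 * 1| < π := by
      rw [mul_one, abs_of_pos hγ0pos]; linarith
    have happ := hall 1 k0 γ0 one_pos hk0 (ne_of_gt hγ0pos) hγπ
    rw [formula ρ 1 k0 γ0 (by positivity)] at happ
    have hge := fwd_final ρ k0 (Real.sin (γ0 * 1)) (Real.sin (γ0 * 1 / 2))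
      (sin_sq_double (γ0 * 1)) hρ0 hρ1 hu0 hu1 hco hk0_def
    exact absurd happ (not_lt.mpr hge)
  · -- backward
    intro h2 h k γ hh hk hγ habs
    have hρk : (0:ℝ) ≤ ρ * k := by positivity
    rw [formula ρ h k γ hρk]
    have hhalf : |γ * h / 2| < π / 2 := by
      have : |γ * h / 2| = |γ * h| / 2 := by
        rw [abs_div]; norm_num
      rw [this]; linarith
    have habs' := abs_lt.mp hhalf
    have hπpos := Real.pi_pos
    have hne : γ * h / 2 ≠ 0 := by
      intro hzero
      have : γ * h = 0 := by linarith [hzero]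
      rcases mul_eq_zero.mp this with h1 | h1
      · exact hγ h1
      · exact (ne_of_gt hh) h1
    have ht_ne : Real.sin (γ * h / 2) ≠ 0 := by
      intro hs
      exact hne ((Real.sin_eq_zero_iff_of_lt_of_lt (by linarith) (by linarith)).mp hs)
    have hu0 : 0 < Real.sin (γ * h / 2) ^ 2 := pow_two_pos_of_ne_zero ht_ne
    have hcos : 0 < Real.cos (γ * h / 2) :=
      Real.cos_pos_of_mem_Ioo ⟨by linarith [habs'.1], habs'.2⟩
    have hu1 : Real.sin (γ * h / 2) ^ 2 < 1 := by
      nlinarith [Real.sin_sq_add_cos_sq (γ * h / 2)]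
    exact bwd_final ρ h k (Real.sin (γ * h)) (Real.sin (γ * h / 2))
      (sin_sq_double (γ * h)) hh hk hρ0 hρ1 h2 hu0 hu1
end

section
/- With Z standard normal, a = -sin²(hγ)/(2h²), â = -2sin²(hγ/2)/h², c = sin(hγ)/h, u = sin²(hγ/2)/(hγ/2)², E[|1 - i√(ρk)cZ + ρka(Z²-1)|²] = 1 + ρ γ²k u cos²(hγ/2) + (ρ²/2) γ⁴k²u² cos⁴(hγ/2), and |1 - âk|² = 1 + γ²ku + (1/4)γ⁴k²u². Consequently E[|X_{n+1}|²]/E[|X_n|²] = (1 + ρ γ²ku cos²(hγ/2) + (ρ²/2)γ⁴k²u²cos⁴(hγ/2)) / (1 + γ²ku + (1/4)γ⁴k²u²). -/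
open MeasureTheory ProbabilityTheory

section Aux

open Real

lemma integ_pow_gauss (n : ℕ) : Integrable (fun x : ℝ => x ^ n * Real.exp (-(1/2) * x ^ 2)) := by
  have := integrable_rpow_mul_exp_neg_mul_sq (b := 1/2) (by norm_num) (s := (n:ℝ))
    (lt_of_lt_of_le (by norm_num) (Nat.cast_nonneg n))
  simpa [Real.rpow_natCast] using this

lemma hpdf (x : ℝ) : gaussianPDFReal 0 1 x = (Real.sqrt (2*π))⁻¹ * Real.exp (-(1/2) * x^2) := by
  rw [gaussianPDFReal]
  simp only [NNReal.coe_one, mul_one, sub_zero]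
  congr 1
  ring_nf

lemma gauss_density_integral (g : ℝ → ℝ) :
    ∫ x, g x ∂(gaussianReal 0 1) = ∫ x, gaussianPDFReal 0 1 x * g x := by
  rw [gaussianReal_of_var_ne_zero 0 one_ne_zero]
  have hd : gaussianPDF 0 1 = fun x => ((gaussianPDFReal 0 1 x).toNNReal : ENNReal) := rfl
  rw [hd, integral_withDensity_eq_integral_smul (measurable_gaussianPDFReal 0 1).real_toNNReal g]
  congr 1; ext x
  rw [NNReal.smul_def, Real.coe_toNNReal _ (gaussianPDFReal_nonneg 0 1 x), smul_eq_mul]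

lemma even_moment (m : ℕ) : ∫ x : ℝ, x ^ (2*m) * Real.exp (-(1/2) * x ^ 2)
    = (2:ℝ) ^ ((m:ℝ) + 1/2) * Real.Gamma ((m:ℝ) + 1/2) := by
  have h1 : ∫ x : ℝ, x ^ (2*m) * Real.exp (-(1/2) * x ^ 2)
      = 2 * ∫ x in Set.Ioi (0:ℝ), x ^ (2*m) * Real.exp (-(1/2) * x ^ 2) := by
    rw [← integral_comp_abs (f := fun x => x ^ (2*m) * Real.exp (-(1/2) * x ^ 2))]
    congr 1; ext x
    rw [(even_two_mul m).pow_abs, sq_abs]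
  have h2 : ∫ x in Set.Ioi (0:ℝ), x ^ (2*m) * Real.exp (-(1/2) * x ^ 2)
      = (1/2:ℝ) ^ (-(((2*m:ℕ):ℝ) + 1) / 2) * (1 / 2) * Real.Gamma ((((2*m:ℕ):ℝ) + 1) / 2) := by
    have := integral_rpow_mul_exp_neg_mul_rpow (p := 2) (q := ((2*m:ℕ):ℝ)) (b := 1/2)
      (by norm_num) (lt_of_lt_of_le (by norm_num) (Nat.cast_nonneg _)) (by norm_num)
    rw [← this]
    refine setIntegral_congr_fun measurableSet_Ioi (fun x hx => ?_)
    rw [show ((2:ℝ)) = ((2:ℕ):ℝ) by norm_num, Real.rpow_natCast, Real.rpow_natCast]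
  rw [h1, h2]
  rw [show (-(((2*m:ℕ):ℝ) + 1) / 2) = -((m:ℝ) + 1/2) by push_cast; ring,
    show ((((2*m:ℕ):ℝ)) + 1) / 2 = (m:ℝ) + 1/2 by push_cast; ring,
    Real.rpow_neg (by norm_num), one_div (2:ℝ), Real.inv_rpow (by norm_num), inv_inv]
  ring

lemma two_rpow_half : (2:ℝ) ^ ((1:ℝ)/2) = Real.sqrt 2 := by
  rw [Real.sqrt_eq_rpow]

lemma M0' : ∫ x : ℝ, Real.exp (-(1/2) * x ^ 2) = Real.sqrt 2 * Real.sqrt π := by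
  have h := even_moment 0
  norm_num at h ⊢
  rw [h, Real.Gamma_one_half_eq, two_rpow_half]

lemma M2' : ∫ x : ℝ, x ^ 2 * Real.exp (-(1/2) * x ^ 2) = Real.sqrt 2 * Real.sqrt π := by
  have h := even_moment 1
  norm_num at h ⊢
  rw [h, show (3:ℝ)/2 = 1/2+1 by ring, Real.rpow_add (by norm_num), Real.rpow_one,
    Real.Gamma_add_one (by norm_num), Real.Gamma_one_half_eq, two_rpow_half]
  ring

lemma M4' : ∫ x : ℝ, x ^ 4 * Real.exp (-(1/2) * x ^ 2) = 3 * (Real.sqrt 2 * Real.sqrt π) := by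
  have h := even_moment 2
  norm_num at h ⊢
  rw [h, show (5:ℝ)/2 = 1/2+1+1 by ring, Real.rpow_add (by norm_num),
    Real.rpow_add (by norm_num), Real.rpow_one,
    Real.Gamma_add_one (by norm_num), Real.Gamma_add_one (by norm_num),
    Real.Gamma_one_half_eq, two_rpow_half]
  ring

lemma integral_quartic (α β δ : ℝ) :
    ∫ z, (α + β*z^2 + δ*z^4) ∂(gaussianReal 0 1) = α + β + 3*δ := by
  rw [gauss_density_integral]
  have key : ∀ x : ℝ, gaussianPDFReal 0 1 x * (α + β*x^2 + δ*x^4)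
      = (Real.sqrt (2*π))⁻¹ • (α * (Real.exp (-(1/2) * x^2))
        + (β * (x^2 * Real.exp (-(1/2) * x^2)) + δ * (x^4 * Real.exp (-(1/2) * x^2)))) := by
    intro x
    rw [hpdf, smul_eq_mul]
    ring
  simp_rw [key]
  rw [integral_smul, integral_add, integral_add]
  rotate_left
  · have := (integ_pow_gauss 2).const_mul β
    simpa [mul_assoc] using this
  · have := (integ_pow_gauss 4).const_mul δ
    simpa [mul_assoc] using this
  · have := (integ_pow_gauss 0).const_mul α
    simpa [mul_assoc] using this
  · exact ((integ_pow_gauss 2).const_mul β).add ((integ_pow_gauss 4).const_mul δ)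
  rw [integral_const_mul, integral_const_mul, integral_const_mul, M0', M2', M4', smul_eq_mul]
  have h2 : Real.sqrt 2 ≠ 0 := by positivity
  have hπ : Real.sqrt π ≠ 0 := by
    have := Real.pi_pos; positivity
  rw [Real.sqrt_mul (by norm_num) π]
  field_simp
  ring

lemma abs_sq_expr (s c0 a0 z : ℝ) (hs : 0 ≤ s) :
    (norm ((1:ℂ) - Complex.I * ((Real.sqrt s : ℝ):ℂ) * ((c0:ℝ):ℂ) * ((z:ℝ):ℂ)
      + ((s:ℝ):ℂ) * ((a0:ℝ):ℂ) * (((z:ℝ):ℂ)^2 - 1)))^2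
    = (1 + s*a0*(z^2-1))^2 + s*c0^2*z^2 := by
  rw [Complex.sq_norm]
  simp [Complex.normSq_apply, ← Complex.ofReal_pow]
  ring_nf
  rw [Real.sq_sqrt hs]
  ring

lemma trig_key (h γ : ℝ) (hh : h ≠ 0) :
    (Real.sin (h*γ))^2 / h^2
      = γ^2 * ((Real.sin (h*γ/2))^2/(h*γ/2)^2) * (Real.cos (h*γ/2))^2 := by
  rcases eq_or_ne γ 0 with rfl | hγ
  · simp
  · rw [show h*γ = 2*(h*γ/2) by ring, Real.sin_two_mul]
    rw [show 2*(h*γ/2)/2 = h*γ/2 by ring]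
    field_simp

lemma trig_key2 (h γ : ℝ) (hh : h ≠ 0) :
    γ^2 * ((Real.sin (h*γ/2))^2/(h*γ/2)^2) = 4 * (Real.sin (h*γ/2))^2 / h^2 := by
  rcases eq_or_ne γ 0 with rfl | hγ
  · simp
  · field_simp
    ring

end Aux

/-- with `Z` standard normal, `a = -sin²(hγ)/(2h²)`,
`â = -2sin²(hγ/2)/h²`, `c = sin(hγ)/h`, `u = sin²(hγ/2)/(hγ/2)²`,
`E[|1 - i√(ρk)cZ + ρka(Z²-1)|²] = 1 + ργ²ku cos²(hγ/2) + (ρ²/2)γ⁴k²u²cos⁴(hγ/2)`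
and `|1 - âk|² = 1 + γ²ku + (1/4)γ⁴k²u²`; consequently one mean-square step
multiplies `E[|X_n|²]` by the quotient of these two quantities. -/
theorem stmt_9 (h k γ ρ : ℝ) (hh : 0 < h) (hk : 0 < k) (hρ : 0 < ρ) :
    (∫ z : ℝ, (norm ((1 : ℂ)
        - Complex.I * ((Real.sqrt (ρ * k) : ℝ) : ℂ)
            * ((Real.sin (h * γ) / h : ℝ) : ℂ) * (z : ℂ)
        + ((ρ * k : ℝ) : ℂ) * ((-(Real.sin (h * γ))^2 / (2 * h^2) : ℝ) : ℂ)
            * ((z : ℂ)^2 - 1)))^2 ∂(gaussianReal 0 1))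
      = 1 + ρ * γ^2 * k * ((Real.sin (h * γ / 2))^2 / (h * γ / 2)^2)
            * (Real.cos (h * γ / 2))^2
        + (ρ^2 / 2) * γ^4 * k^2 * ((Real.sin (h * γ / 2))^2 / (h * γ / 2)^2)^2
            * (Real.cos (h * γ / 2))^4
    ∧ |1 - (-2 * (Real.sin (h * γ / 2))^2 / h^2) * k|^2
      = 1 + γ^2 * k * ((Real.sin (h * γ / 2))^2 / (h * γ / 2)^2)
        + (1/4) * γ^4 * k^2 * ((Real.sin (h * γ / 2))^2 / (h * γ / 2)^2)^2
    ∧ (∀ (Ω : Type) [MeasureSpace Ω] [IsProbabilityMeasure (ℙ : Measure Ω)]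
        (X : Ω → ℂ) (Z : Ω → ℝ), Measurable Z → AEMeasurable X →
        Measure.map Z ℙ = gaussianReal 0 1 →
        IndepFun X Z ℙ →
        Integrable (fun ω => (norm (X ω))^2) ℙ →
      (∫ ω, (norm ((((1 : ℂ)
          - Complex.I * ((Real.sqrt (ρ * k) : ℝ) : ℂ)
              * ((Real.sin (h * γ) / h : ℝ) : ℂ) * (Z ω : ℂ)
          + ((ρ * k : ℝ) : ℂ) * ((-(Real.sin (h * γ))^2 / (2 * h^2) : ℝ) : ℂ)
              * ((Z ω : ℂ)^2 - 1))
          / ((1 : ℂ) - ((-2 * (Real.sin (h * γ / 2))^2 / h^2 : ℝ) : ℂ) * (k : ℂ)))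
          * X ω))^2 ∂ℙ)
        = ((1 + ρ * γ^2 * k * ((Real.sin (h * γ / 2))^2 / (h * γ / 2)^2)
              * (Real.cos (h * γ / 2))^2
            + (ρ^2 / 2) * γ^4 * k^2 * ((Real.sin (h * γ / 2))^2 / (h * γ / 2)^2)^2
              * (Real.cos (h * γ / 2))^4)
          / (1 + γ^2 * k * ((Real.sin (h * γ / 2))^2 / (h * γ / 2)^2)
            + (1/4) * γ^4 * k^2 * ((Real.sin (h * γ / 2))^2 / (h * γ / 2)^2)^2))
          * ∫ ω, (norm (X ω))^2 ∂ℙ) := by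
  have hh' : h ≠ 0 := ne_of_gt hh
  have hs : (0:ℝ) ≤ ρ * k := le_of_lt (mul_pos hρ hk)
  set u : ℝ := (Real.sin (h * γ / 2))^2 / (h * γ / 2)^2 with hu
  have hu0 : 0 ≤ u := div_nonneg (sq_nonneg _) (sq_nonneg _)
  set c0 : ℝ := Real.sin (h * γ) / h with hc0
  set a0 : ℝ := -(Real.sin (h * γ))^2 / (2 * h^2) with ha0
  set P : ℝ := ρ * k * a0 with hP
  set Q : ℝ := ρ * k * c0^2 with hQ
  have hsin : (Real.sin (h*γ))^2 = γ^2 * u * (Real.cos (h*γ/2))^2 * h^2 := by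
    have h2 := trig_key h γ hh'
    rw [← hu] at h2
    exact (div_eq_iff (pow_ne_zero 2 hh')).mp h2
  have part1 : (∫ z : ℝ, (norm ((1 : ℂ)
        - Complex.I * ((Real.sqrt (ρ * k) : ℝ) : ℂ)
            * ((Real.sin (h * γ) / h : ℝ) : ℂ) * (z : ℂ)
        + ((ρ * k : ℝ) : ℂ) * ((-(Real.sin (h * γ))^2 / (2 * h^2) : ℝ) : ℂ)
            * ((z : ℂ)^2 - 1)))^2 ∂(gaussianReal 0 1))
      = 1 + ρ * γ^2 * k * u * (Real.cos (h * γ / 2))^2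
        + (ρ^2 / 2) * γ^4 * k^2 * u^2 * (Real.cos (h * γ / 2))^4 := by
    have ptwise : ∀ z : ℝ, (norm ((1 : ℂ)
        - Complex.I * ((Real.sqrt (ρ * k) : ℝ) : ℂ)
            * ((Real.sin (h * γ) / h : ℝ) : ℂ) * (z : ℂ)
        + ((ρ * k : ℝ) : ℂ) * ((-(Real.sin (h * γ))^2 / (2 * h^2) : ℝ) : ℂ)
            * ((z : ℂ)^2 - 1)))^2
        = (1 - 2*P + P^2) + (2*P - 2*P^2 + Q)*z^2 + (P^2)*z^4 := by
      intro z
      rw [abs_sq_expr (ρ*k) c0 a0 z hs]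
      ring
    rw [integral_congr_ae (Filter.Eventually.of_forall ptwise), integral_quartic]
    -- now pure algebra
    have hc2 : c0^2 = γ^2 * u * (Real.cos (h*γ/2))^2 := by
      rw [hc0, div_pow, hsin]
      field_simp
    have ha2 : a0 = -(γ^2 * u * (Real.cos (h*γ/2))^2) / 2 := by
      rw [ha0, hsin]
      field_simp
    have hQ2 : Q = ρ * k * (γ^2 * u * (Real.cos (h*γ/2))^2) := by rw [hQ, hc2]
    have hP2 : P = -(ρ * k * (γ^2 * u * (Real.cos (h*γ/2))^2)) / 2 := by
      rw [hP, ha2]; ring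
    rw [hQ2, hP2]
    ring
  have part2 : |1 - (-2 * (Real.sin (h * γ / 2))^2 / h^2) * k|^2
      = 1 + γ^2 * k * u + (1/4) * γ^4 * k^2 * u^2 := by
    have hgu : γ^2 * u = 4 * (Real.sin (h*γ/2))^2 / h^2 := trig_key2 h γ hh'
    have hnn : (0:ℝ) ≤ 1 - (-2 * (Real.sin (h * γ / 2))^2 / h^2) * k := by
      have h1 : (0:ℝ) ≤ (Real.sin (h * γ / 2))^2 / h^2 * k :=
        mul_nonneg (div_nonneg (sq_nonneg _) (sq_nonneg _)) hk.le
      have e : 1 - (-2 * (Real.sin (h * γ / 2))^2 / h^2) * k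
          = 1 + 2 * ((Real.sin (h * γ / 2))^2 / h^2 * k) := by ring
      rw [e]; linarith
    rw [abs_of_nonneg hnn]
    have expand : 1 + γ^2*k*u + (1/4)*γ^4*k^2*u^2
        = 1 + k*(γ^2*u) + (1/4)*k^2*(γ^2*u)^2 := by ring
    rw [expand, hgu]
    field_simp
    ring
  refine ⟨part1, part2, ?_⟩
  intro Ω _ _ X Z hZ hX hmap hind hint
  -- notation
  set N : ℝ := 1 + ρ * γ^2 * k * u * (Real.cos (h * γ / 2))^2
        + (ρ^2 / 2) * γ^4 * k^2 * u^2 * (Real.cos (h * γ / 2))^4 with hN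
  set D : ℝ := 1 + γ^2 * k * u + (1/4) * γ^4 * k^2 * u^2 with hD
  have hDpos : 0 < D := by
    have h1 : 0 ≤ γ^2 * k * u := by positivity
    have h2 : 0 ≤ (1/4) * γ^4 * k^2 * u^2 := by positivity
    rw [hD]; linarith
  set R : ℝ → ℂ := fun z => (1 : ℂ)
          - Complex.I * ((Real.sqrt (ρ * k) : ℝ) : ℂ)
              * ((Real.sin (h * γ) / h : ℝ) : ℂ) * ((z:ℝ) : ℂ)
          + ((ρ * k : ℝ) : ℂ) * ((-(Real.sin (h * γ))^2 / (2 * h^2) : ℝ) : ℂ)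
              * (((z:ℝ) : ℂ)^2 - 1) with hR
  set d : ℂ := (1 : ℂ) - ((-2 * (Real.sin (h * γ / 2))^2 / h^2 : ℝ) : ℂ) * (k : ℂ) with hd
  have hRcont : Continuous R := by
    rw [hR]
    refine Continuous.add (Continuous.sub continuous_const ?_) (continuous_const.mul ?_)
    · exact continuous_const.mul Complex.continuous_ofReal
    · exact (Complex.continuous_ofReal.pow 2).sub continuous_const
  set φ : ℝ → ℝ := fun z => (norm (R z / d))^2 with hφ
  set ψ : ℂ → ℝ := fun x => (norm x)^2 with hψ
  have hφm : Measurable φ := by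
    rw [hφ]
    exact ((continuous_norm.comp (hRcont.div_const d)).pow 2).measurable
  have hψm : Measurable ψ := (continuous_norm.pow 2).measurable
  have habsd : (norm d)^2 = D := by
    rw [hd]
    rw [show ((-2 * (Real.sin (h * γ / 2))^2 / h^2 : ℝ) : ℂ) * (k : ℂ)
      = (((-2 * (Real.sin (h * γ / 2))^2 / h^2) * k : ℝ) : ℂ) by push_cast; ring]
    rw [show (1:ℂ) - (((-2 * (Real.sin (h * γ / 2))^2 / h^2) * k : ℝ) : ℂ)
      = ((1 - (-2 * (Real.sin (h * γ / 2))^2 / h^2) * k : ℝ) : ℂ) by push_cast; ring]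
    rw [Complex.norm_real, Real.norm_eq_abs]
    rw [part2]
  -- integrand factorization
  have fact : ∀ ω, (norm ((R (Z ω) / d) * X ω))^2 = ψ (X ω) * φ (Z ω) := by
    intro ω
    rw [norm_mul]
    simp only [hφ, hψ]
    rw [norm_div]
    ring
  rw [integral_congr_ae (Filter.Eventually.of_forall fact)]
  have hindc : IndepFun (fun ω => ψ (X ω)) (fun ω => φ (Z ω)) ℙ :=
    hind.comp hψm hφm
  have hmul := hindc.integral_mul_eq_mul_integral
    (hψm.comp_aemeasurable hX).aestronglyMeasurable
    ((hφm.comp hZ).aemeasurable).aestronglyMeasurable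
  have hmul' : ∫ ω, ψ (X ω) * φ (Z ω) ∂ℙ
      = (∫ ω, ψ (X ω) ∂ℙ) * ∫ ω, φ (Z ω) ∂ℙ := by
    simpa [Pi.mul_apply] using hmul
  rw [hmul']
  -- compute ∫ φ(Z ω)
  have hZint : ∫ ω, φ (Z ω) ∂ℙ = ∫ z, φ z ∂(gaussianReal 0 1) := by
    rw [← hmap]
    exact (integral_map hZ.aemeasurable hφm.aestronglyMeasurable).symm
  have hφint : ∫ z, φ z ∂(gaussianReal 0 1) = N / D := by
    have hφeq : ∀ z : ℝ, φ z = (norm (R z))^2 / D := by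
      intro z
      simp only [hφ]
      rw [norm_div, div_pow, habsd]
    rw [integral_congr_ae (Filter.Eventually.of_forall hφeq), integral_div]
    rw [show (∫ z, (norm (R z))^2 ∂(gaussianReal 0 1)) = N from part1]
  rw [hZint, hφint]
  simp only [hψ]
  ring
end

section
/- For 0 < ρ ≤ 1/√2 and hγ ∈ (−π,π), the one-step mean-square amplification factor f(γ) = (1 + ρ γ²ku cos²(hγ/2) + (ρ²/2)γ⁴k²u²cos⁴(hγ/2)) / (1 + γ²ku + (1/4)γ⁴k²u²) satisfies f(γ) < 1 for γ ≠ 0; equivalently the numerator minus denominator equals −γ²ku(1 − ρcos²(hγ/2)) − (1/4)γ⁴k²u²(1 − 2ρ²cos⁴(hγ/2)) < 0. -/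
/-- for `0 < ρ ≤ 1/√2`, `hγ ∈ (-π,π)`, `γ ≠ 0`, the one-step
mean-square amplification factor
`f(γ) = (1 + ργ²ku cos²(hγ/2) + (ρ²/2)γ⁴k²u²cos⁴(hγ/2)) / (1 + γ²ku + (1/4)γ⁴k²u²)`
satisfies `f(γ) < 1`; equivalently the numerator minus the denominator equals
`-γ²ku(1 - ρcos²(hγ/2)) - (1/4)γ⁴k²u²(1 - 2ρ²cos⁴(hγ/2)) < 0`. -/
theorem stmt_10 (h k γ ρ : ℝ) (hh : 0 < h) (hk : 0 < k)
    (hρ0 : 0 < ρ) (hρ1 : ρ ≤ 1 / Real.sqrt 2)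
    (hγ0 : γ ≠ 0) (hγ : |h * γ| < Real.pi) :
    ((1 + ρ * γ^2 * k * ((Real.sin (h * γ / 2))^2 / (h * γ / 2)^2)
          * (Real.cos (h * γ / 2))^2
        + (ρ^2 / 2) * γ^4 * k^2 * ((Real.sin (h * γ / 2))^2 / (h * γ / 2)^2)^2
          * (Real.cos (h * γ / 2))^4)
      - (1 + γ^2 * k * ((Real.sin (h * γ / 2))^2 / (h * γ / 2)^2)
        + (1/4) * γ^4 * k^2 * ((Real.sin (h * γ / 2))^2 / (h * γ / 2)^2)^2)
      = -(γ^2 * k * ((Real.sin (h * γ / 2))^2 / (h * γ / 2)^2)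
            * (1 - ρ * (Real.cos (h * γ / 2))^2))
        - (1/4) * γ^4 * k^2 * ((Real.sin (h * γ / 2))^2 / (h * γ / 2)^2)^2
            * (1 - 2 * ρ^2 * (Real.cos (h * γ / 2))^4))
    ∧ (-(γ^2 * k * ((Real.sin (h * γ / 2))^2 / (h * γ / 2)^2)
            * (1 - ρ * (Real.cos (h * γ / 2))^2))
        - (1/4) * γ^4 * k^2 * ((Real.sin (h * γ / 2))^2 / (h * γ / 2)^2)^2
            * (1 - 2 * ρ^2 * (Real.cos (h * γ / 2))^4) < 0)
    ∧ ((1 + ρ * γ^2 * k * ((Real.sin (h * γ / 2))^2 / (h * γ / 2)^2)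
          * (Real.cos (h * γ / 2))^2
        + (ρ^2 / 2) * γ^4 * k^2 * ((Real.sin (h * γ / 2))^2 / (h * γ / 2)^2)^2
          * (Real.cos (h * γ / 2))^4)
      / (1 + γ^2 * k * ((Real.sin (h * γ / 2))^2 / (h * γ / 2)^2)
        + (1/4) * γ^4 * k^2 * ((Real.sin (h * γ / 2))^2 / (h * γ / 2)^2)^2) < 1) := by
  have hx0 : h * γ / 2 ≠ 0 := by
    have := hγ0; have := hh.ne'
    exact div_ne_zero (mul_ne_zero hh.ne' hγ0) two_ne_zero
  set x := h * γ / 2 with hxdef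
  have hxlt : |x| < Real.pi / 2 := by
    rw [hxdef, abs_div]
    have : |(2:ℝ)| = 2 := by norm_num
    rw [this]
    linarith [hγ]
  have hsin : Real.sin x ≠ 0 := by
    rcases lt_or_gt_of_ne hx0 with hlt | hgt
    · have : Real.sin (-x) > 0 := Real.sin_pos_of_pos_of_lt_pi (by linarith)
        (by have := abs_lt.mp hxlt; linarith [Real.pi_pos])
      rw [Real.sin_neg] at this; linarith
    · have : Real.sin x > 0 := Real.sin_pos_of_pos_of_lt_pi hgt
        (by have := abs_lt.mp hxlt; linarith [Real.pi_pos])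
      linarith
  have hu : 0 < Real.sin x ^ 2 / x ^ 2 :=
    div_pos (by positivity) (by positivity)
  set u := Real.sin x ^ 2 / x ^ 2 with hudef
  set c := Real.cos x with hcdef
  have hc1 : c ^ 2 ≤ 1 := Real.cos_sq_le_one x
  have hρ2 : ρ ^ 2 ≤ 1 / 2 := by
    have h2 : (0:ℝ) < Real.sqrt 2 := Real.sqrt_pos.mpr (by norm_num)
    have := Real.sq_sqrt (by norm_num : (2:ℝ) ≥ 0)
    have hm := mul_le_mul hρ1 hρ1 hρ0.le (by positivity)
    have he : 1 / Real.sqrt 2 * (1 / Real.sqrt 2) = 1 / 2 := by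
      rw [div_mul_div_comm, one_mul, Real.mul_self_sqrt (by norm_num : (0:ℝ) ≤ 2)]
    nlinarith
  have hρlt1 : ρ < 1 := by
    have h2 : (1:ℝ) < Real.sqrt 2 := by
      have := Real.sq_sqrt (by norm_num : (2:ℝ) ≥ 0)
      nlinarith [Real.sqrt_nonneg 2]
    have : 1 / Real.sqrt 2 < 1 := by
      rw [div_lt_one (by linarith)]; exact h2
    linarith
  have hA : 0 < 1 - ρ * c ^ 2 := by nlinarith
  have hB : 0 ≤ 1 - 2 * ρ ^ 2 * c ^ 4 := by nlinarith [sq_nonneg c, sq_nonneg (c^2)]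
  have hγ2 : 0 < γ ^ 2 := by positivity
  have hT1 : 0 < γ ^ 2 * k * u * (1 - ρ * c ^ 2) := by positivity
  have hT2 : 0 ≤ (1/4) * γ ^ 4 * k ^ 2 * u ^ 2 * (1 - 2 * ρ ^ 2 * c ^ 4) := by positivity
  refine ⟨by ring, by linarith, ?_⟩
  have hD : 0 < 1 + γ ^ 2 * k * u + (1/4) * γ ^ 4 * k ^ 2 * u ^ 2 := by positivity
  rw [div_lt_one hD]
  nlinarith
end

section
/- Define q(ρ,u) = (1 + ρu + (1/2)ρ²u²)/(1 + u + (1/4)u²) for u ∈ [4/π², 1] and ρ ∈ (0, 1/√2]. Then q is strictly decreasing in u and strictly increasing in ρ on this range, and hence q(ρ,u) ≤ q(1/√2, 4/π²) < 0.918; moreover q(1/2, 4/π²) = (1 + 2/π² + 2/π⁴)/(1 + 4/π² + 4/π⁴) < 0.8457. -/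
open Real

private lemma bracket_nonneg (ρ a b : ℝ) (hρ : 0 < ρ) (hρ2 : ρ^2 ≤ 1/2)
    (ha : 0 < a) (hb : b ≤ 1) (hab : a ≤ b) :
    0 ≤ (1-ρ) + (a+b)*(1/4-ρ^2/2) + a*b*(ρ/4-ρ^2/2) := by
  have hρ1 : ρ < 1 := by nlinarith
  have hab1 : a*b ≤ 1 := by nlinarith
  have habpos : 0 < a*b := by nlinarith
  rcases le_or_gt ρ (1/2) with h | h
  · nlinarith [mul_nonneg habpos.le (by nlinarith : (0:ℝ) ≤ ρ/4 - ρ^2/2)]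
  · nlinarith [mul_nonneg (by linarith : (0:ℝ) ≤ 1 - a*b) (by nlinarith : (0:ℝ) ≤ ρ^2/2 - ρ/4)]

private lemma den_pos (u : ℝ) (hu : 0 < u) : 0 < 1 + u + (1/4)*u^2 := by positivity

private lemma anti_le (ρ a b : ℝ) (hρ : 0 < ρ) (hρ2 : ρ^2 ≤ 1/2)
    (ha : 0 < a) (hb : b ≤ 1) (hab : a ≤ b) :
    (1 + ρ*b + (1/2)*ρ^2*b^2) / (1 + b + (1/4)*b^2)
      ≤ (1 + ρ*a + (1/2)*ρ^2*a^2) / (1 + a + (1/4)*a^2) := by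
  rw [div_le_div_iff₀ (den_pos b (ha.trans_le hab)) (den_pos a ha)]
  nlinarith [mul_nonneg (sub_nonneg.2 hab) (bracket_nonneg ρ a b hρ hρ2 ha hb hab)]

private lemma anti_lt (ρ a b : ℝ) (hρ : 0 < ρ) (hρ2 : ρ^2 ≤ 1/2)
    (ha : 0 < a) (hb : b ≤ 1) (hab : a < b) :
    (1 + ρ*b + (1/2)*ρ^2*b^2) / (1 + b + (1/4)*b^2)
      < (1 + ρ*a + (1/2)*ρ^2*a^2) / (1 + a + (1/4)*a^2) := by
  rw [div_lt_div_iff₀ (den_pos b (ha.trans hab)) (den_pos a ha)]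
  have hbr := bracket_nonneg ρ a b hρ hρ2 ha hb hab.le
  have hρ1 : ρ < 1 := by nlinarith
  have hbrpos : 0 < (1-ρ) + (a+b)*(1/4-ρ^2/2) + a*b*(ρ/4-ρ^2/2) := by
    rcases le_or_gt ρ (1/2) with h | h
    · nlinarith [mul_nonneg (by nlinarith : (0:ℝ) ≤ a*b) (by nlinarith : (0:ℝ) ≤ ρ/4 - ρ^2/2),
        mul_nonneg (by nlinarith : (0:ℝ) ≤ a+b) (by nlinarith : (0:ℝ) ≤ 1/4 - ρ^2/2)]
    · nlinarith [mul_nonneg (by nlinarith : (0:ℝ) ≤ 1 - a*b) (by nlinarith : (0:ℝ) ≤ ρ^2/2 - ρ/4),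
        mul_nonneg (by nlinarith : (0:ℝ) ≤ a+b) (by nlinarith : (0:ℝ) ≤ 1/4 - ρ^2/2)]
  nlinarith [mul_pos (sub_pos.2 hab) hbrpos]

set_option maxHeartbeats 1000000 in
/-- `q(ρ,u) = (1 + ρu + (1/2)ρ²u²)/(1 + u + (1/4)u²)` is strictly
decreasing in `u ∈ [4/π²,1]`, strictly increasing in `ρ ∈ (0,1/√2]`, hence
`q(ρ,u) ≤ q(1/√2, 4/π²) < 0.918`; moreover
`q(1/2, 4/π²) = (1 + 2/π² + 2/π⁴)/(1 + 4/π² + 4/π⁴) < 0.8457`. -/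
theorem stmt_13 :
    (∀ ρ : ℝ, 0 < ρ → ρ ≤ 1 / Real.sqrt 2 →
      StrictAntiOn (fun u : ℝ => (1 + ρ*u + (1/2)*ρ^2*u^2) / (1 + u + (1/4)*u^2))
        (Set.Icc (4/π^2) 1))
    ∧ (∀ u : ℝ, u ∈ Set.Icc (4/π^2) (1:ℝ) →
      StrictMonoOn (fun ρ : ℝ => (1 + ρ*u + (1/2)*ρ^2*u^2) / (1 + u + (1/4)*u^2))
        (Set.Ioc (0:ℝ) (1 / Real.sqrt 2)))
    ∧ (∀ ρ u : ℝ, 0 < ρ → ρ ≤ 1 / Real.sqrt 2 → u ∈ Set.Icc (4/π^2) (1:ℝ) →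
      (1 + ρ*u + (1/2)*ρ^2*u^2) / (1 + u + (1/4)*u^2)
        ≤ (1 + (1/Real.sqrt 2)*(4/π^2) + (1/2)*(1/Real.sqrt 2)^2*(4/π^2)^2)
          / (1 + 4/π^2 + (1/4)*(4/π^2)^2))
    ∧ ((1 + (1/Real.sqrt 2)*(4/π^2) + (1/2)*(1/Real.sqrt 2)^2*(4/π^2)^2)
          / (1 + 4/π^2 + (1/4)*(4/π^2)^2) < 0.918)
    ∧ ((1 + (1/2)*(4/π^2) + (1/2)*(1/2)^2*(4/π^2)^2)
          / (1 + 4/π^2 + (1/4)*(4/π^2)^2)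
        = (1 + 2/π^2 + 2/π^4) / (1 + 4/π^2 + 4/π^4))
    ∧ ((1 + 2/π^2 + 2/π^4) / (1 + 4/π^2 + 4/π^4) < 0.8457) := by
  have hs : Real.sqrt 2 ^ 2 = 2 := Real.sq_sqrt (by norm_num)
  have hs0 : 0 < Real.sqrt 2 := Real.sqrt_pos.2 (by norm_num)
  have hsle : Real.sqrt 2 < 1.4142136 := by nlinarith
  have hsge : 1.414213 < Real.sqrt 2 := by nlinarith
  have hr2 : (1 / Real.sqrt 2)^2 = 1/2 := by
    rw [div_pow, hs]; norm_num
  have hr0 : 0 < 1 / Real.sqrt 2 := by positivity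
  have hπ : (3.141592:ℝ) < π := Real.pi_gt_d6
  have hπ' : π < 3.141593 := Real.pi_lt_d6
  have hπ2 : (9.8696002:ℝ) < π^2 := by nlinarith
  have hπ2' : π^2 < 9.8696066 := by nlinarith
  have hπ0 : π ≠ 0 := by positivity
  have hu0pos : (0:ℝ) < 4/π^2 := by positivity
  have hu0lt1 : (4:ℝ)/π^2 < 1 := by
    rw [div_lt_one (by positivity)]; nlinarith
  have hρ2of : ∀ ρ : ℝ, 0 < ρ → ρ ≤ 1 / Real.sqrt 2 → ρ^2 ≤ 1/2 := by
    intro ρ h0 h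
    calc ρ^2 ≤ (1 / Real.sqrt 2)^2 := pow_le_pow_left₀ h0.le h 2
      _ = 1/2 := hr2
  refine ⟨?_, ?_, ?_, ?_, ?_, ?_⟩
  · intro ρ hρ hρle u1 hu1 u2 hu2 h12
    exact anti_lt ρ u1 u2 hρ (hρ2of ρ hρ hρle) (lt_of_lt_of_le hu0pos hu1.1) hu2.2 h12
  · intro u hu ρ1 h1 ρ2 h2 h12
    have hupos : 0 < u := lt_of_lt_of_le hu0pos hu.1
    have hden := den_pos u hupos
    simp only
    rw [div_lt_div_iff_of_pos_right hden]
    nlinarith [mul_pos hupos (sub_pos.2 h12), h1.1,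
      mul_nonneg (sq_nonneg u) (by nlinarith [h1.1] : (0:ℝ) ≤ ρ2^2 - ρ1^2)]
  · intro ρ u hρ hρle hu
    have hupos : 0 < u := lt_of_lt_of_le hu0pos hu.1
    calc (1 + ρ*u + (1/2)*ρ^2*u^2) / (1 + u + (1/4)*u^2)
        ≤ (1 + ρ*(4/π^2) + (1/2)*ρ^2*(4/π^2)^2) / (1 + 4/π^2 + (1/4)*(4/π^2)^2) :=
          anti_le ρ (4/π^2) u hρ (hρ2of ρ hρ hρle) hu0pos hu.2 hu.1
      _ ≤ (1 + (1/Real.sqrt 2)*(4/π^2) + (1/2)*(1/Real.sqrt 2)^2*(4/π^2)^2)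
          / (1 + 4/π^2 + (1/4)*(4/π^2)^2) := by
          rw [div_le_div_iff_of_pos_right (den_pos _ hu0pos)]
          have h1 : ρ*(4/π^2) ≤ (1/Real.sqrt 2)*(4/π^2) :=
            mul_le_mul_of_nonneg_right hρle hu0pos.le
          have h2 : ρ^2 ≤ (1/Real.sqrt 2)^2 := pow_le_pow_left₀ hρ.le hρle 2
          nlinarith [sq_nonneg (4/π^2)]
  · rw [hr2, div_lt_iff₀ (den_pos _ hu0pos)]
    have h1s : 1/Real.sqrt 2 < 0.7071072 := by
      rw [div_lt_iff₀ hs0]; nlinarith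
    have hu0a : (4:ℝ)/π^2 < 0.405285 := by
      rw [div_lt_iff₀ (by positivity)]; nlinarith
    have hu0b : (0.4052846:ℝ) < 4/π^2 := by
      rw [lt_div_iff₀ (by positivity)]; nlinarith
    have hq1 : (1/Real.sqrt 2)*(4/π^2) < 0.2866 := by
      calc (1/Real.sqrt 2)*(4/π^2) < 0.7071072*0.405285 :=
            mul_lt_mul'' h1s hu0a hr0.le hu0pos.le
        _ < 0.2866 := by norm_num
    have hq2 : (4/π^2)^2 < 0.16426 := by
      calc (4/π^2)^2 = (4/π^2)*(4/π^2) := sq (4/π^2) ▸ by ring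
        _ < 0.405285*0.405285 := mul_lt_mul'' hu0a hu0a hu0pos.le hu0pos.le
        _ < 0.16426 := by norm_num
    have hq3 : (0.16425:ℝ) < (4/π^2)^2 := by
      calc (0.16425:ℝ) < 0.4052846*0.4052846 := by norm_num
        _ < (4/π^2)*(4/π^2) := mul_lt_mul'' hu0b hu0b (by norm_num) (by norm_num)
        _ = (4/π^2)^2 := by ring
    linarith
  · field_simp
    ring
  · have hπ4 : (0:ℝ) < π^4 := by positivity
    have key : π^4+2*π^2+2 < 0.8457*(π^4+4*π^2+4) := by
      nlinarith [mul_nonneg (by linarith : (0:ℝ) ≤ 9.8696066 - π^2)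
        (by nlinarith : (0:ℝ) ≤ 0.1543*(π^2 + 9.8696066) - 1.3828)]
    have e1 : 1 + 2/π^2 + 2/π^4 = (π^4+2*π^2+2)/π^4 := by field_simp
    have e2 : (0.8457:ℝ) = (0.8457*(π^4+4*π^2+4))/(π^4+4*π^2+4) := by
      rw [mul_div_assoc, div_self (by positivity), mul_one]
    have e3 : 1 + 4/π^2 + 4/π^4 = (π^4+4*π^2+4)/π^4 := by field_simp
    have e4 : (π^4+2*π^2+2)/π^4/((π^4+4*π^2+4)/π^4)
        = (π^4+2*π^2+2)/(π^4+4*π^2+4) := by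
      rw [div_div_div_cancel_right₀]
      positivity
    rw [e1, e3, e4, div_lt_iff₀ (by positivity)]
    linarith
end

section
/- Bias tail bound for the triangular index set: if E_{(l₁,l₂)} = C 2^{−2(l₁+l₂)} and I(l*) = {(l₁,l₂) ∈ ℕ² : (1/3)l₁ + (2/3)l₂ ≤ l*}, then Σ_{(l₁,l₂) ∉ I(l*)} E_{(l₁,l₂)} ≤ C' · 2^{−3l*} · l* for an absolute constant C' (up to logs); in particular choosing l* = (1/3)log₂(c/ε) makes the omitted bias at most O(ε |log ε|). -/
lemma two_rpow_neg_nat' (n : ℕ) : (2:ℝ)^(-(n:ℝ)) = (1/2:ℝ)^n := by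
  rw [Real.rpow_neg (by norm_num), Real.rpow_natCast, one_div, inv_pow]

/-- bias tail bound for the triangular index set. If
`E_{(l₁,l₂)} = C·2^{-2(l₁+l₂)}` and `I(l*) = {(l₁,l₂) : (1/3)l₁+(2/3)l₂ ≤ l*}`,
then the omitted bias satisfies
`Σ_{(l₁,l₂)∉I(l*)} E_{(l₁,l₂)} ≤ C'·C·2^{-3l*}·l*` for an absolute constant
`C'` (up to logs). -/
theorem stmt_18 :
    ∃ C' > (0:ℝ), ∀ C : ℝ, 0 < C → ∀ ls : ℕ, 1 ≤ ls →
      (∑' p : {p : ℕ × ℕ // 3 * ls < p.1 + 2 * p.2},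
          C * (2:ℝ)^(-(2:ℝ)*(((p.1.1 : ℝ)) + ((p.1.2 : ℝ)))))
        ≤ C' * C * (2:ℝ)^(-(3:ℝ)*(ls:ℝ)) * (ls:ℝ) := by
  refine ⟨8, by norm_num, fun C hC ls hls => ?_⟩
  set h : ℕ → ℝ := fun n => (1/2:ℝ)^(2*n - 3*ls) with hh
  have hgeo : Summable (fun n : ℕ => (1/2:ℝ)^n) :=
    summable_geometric_of_lt_one (by norm_num) (by norm_num)
  have hgeo_sum : ∑' n : ℕ, (1/2:ℝ)^n = 2 := by
    rw [tsum_geometric_of_lt_one (by norm_num) (by norm_num)]; norm_num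
  have hhn : ∀ n, 0 ≤ h n := fun n => by positivity
  have hh1 : ∀ n, h n ≤ 1 := fun n => pow_le_one₀ (by norm_num) (by norm_num)
  have key2 : ∀ n, h (n + 2*ls) ≤ (1/2:ℝ)^n := fun n =>
    pow_le_pow_of_le_one (by norm_num) (by norm_num) (by omega)
  have hhsum : Summable h := by
    rw [← summable_nat_add_iff (2*ls)]
    exact Summable.of_nonneg_of_le (fun n => hhn _) key2 hgeo
  have hsum_h : ∑' n, h n ≤ 2*(ls:ℝ) + 2 := by
    rw [← Summable.sum_add_tsum_nat_add (2*ls) hhsum]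
    have h1 : ∑ i ∈ Finset.range (2*ls), h i ≤ 2*(ls:ℝ) := by
      calc ∑ i ∈ Finset.range (2*ls), h i ≤ ∑ _i ∈ Finset.range (2*ls), (1:ℝ) :=
            Finset.sum_le_sum (fun i _ => hh1 i)
        _ = 2*(ls:ℝ) := by simp
    have h2 : ∑' n, h (n + 2*ls) ≤ 2 := by
      calc ∑' n, h (n + 2*ls) ≤ ∑' n : ℕ, (1/2:ℝ)^n :=
            Summable.tsum_le_tsum key2 ((summable_nat_add_iff (2*ls)).2 hhsum) hgeo
        _ = 2 := hgeo_sum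
    linarith
  -- the dominating function
  set F : ℕ × ℕ → ℝ := fun p => (C * (1/2:ℝ)^(3*ls)) * ((1/2:ℝ)^p.1 * h p.2) with hF
  have hFsummul : Summable (fun p : ℕ × ℕ => (1/2:ℝ)^p.1 * h p.2) :=
    Summable.mul_of_nonneg hgeo hhsum (fun n => by positivity) hhn
  have hFsum : Summable F := hFsummul.mul_left _
  set S : Set (ℕ × ℕ) := {p | 3 * ls < p.1 + 2 * p.2} with hS
  set f : ℕ × ℕ → ℝ := fun p => C * (2:ℝ)^(-(2:ℝ)*((p.1:ℝ) + (p.2:ℝ))) with hf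
  have hfval : ∀ p : ℕ × ℕ, f p = C * (1/2:ℝ)^(2*(p.1+p.2)) := by
    intro p
    have : -(2:ℝ)*((p.1:ℝ) + (p.2:ℝ)) = -((2*(p.1+p.2) : ℕ) : ℝ) := by push_cast; ring
    rw [hf]; dsimp only; rw [this, two_rpow_neg_nat']
  have hpt : ∀ p : ℕ × ℕ, S.indicator f p ≤ F p := by
    intro p
    by_cases hp : p ∈ S
    · rw [Set.indicator_of_mem hp, hfval]
      have hmem : 3 * ls < p.1 + 2 * p.2 := hp
      have : F p = C * (1/2:ℝ)^(3*ls + p.1 + (2*p.2 - 3*ls)) := by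
        rw [hF]; dsimp only [hh]; rw [pow_add, pow_add]; ring
      rw [this]
      have hexp : 3*ls + p.1 + (2*p.2 - 3*ls) ≤ 2*(p.1+p.2) := by omega
      exact mul_le_mul_of_nonneg_left
        (pow_le_pow_of_le_one (by norm_num) (by norm_num) hexp) hC.le
    · rw [Set.indicator_of_notMem hp]
      have : 0 ≤ F p := by rw [hF]; dsimp only; positivity
      exact this
  have hindsum : Summable (S.indicator f) :=
    Summable.of_nonneg_of_le
      (fun p => Set.indicator_nonneg (fun q _ => by rw [hfval]; positivity) p) hpt hFsum
  have htsub : (∑' p : {p : ℕ × ℕ // 3 * ls < p.1 + 2 * p.2},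
      C * (2:ℝ)^(-(2:ℝ)*(((p.1.1 : ℝ)) + ((p.1.2 : ℝ))))) = ∑' p : ℕ × ℕ, S.indicator f p := by
    exact tsum_subtype S f
  rw [htsub]
  have step1 : ∑' p : ℕ × ℕ, S.indicator f p ≤ ∑' p, F p := Summable.tsum_le_tsum hpt hindsum hFsum
  have step2 : ∑' p, F p = (C * (1/2:ℝ)^(3*ls)) * ((∑' n : ℕ, (1/2:ℝ)^n) * ∑' n, h n) := by
    rw [hF, tsum_mul_left, Summable.tsum_mul_tsum hgeo hhsum hFsummul]
  have hpow3 : (2:ℝ)^(-(3:ℝ)*(ls:ℝ)) = (1/2:ℝ)^(3*ls) := by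
    have : -(3:ℝ)*(ls:ℝ) = -((3*ls : ℕ) : ℝ) := by push_cast; ring
    rw [this, two_rpow_neg_nat']
  rw [hpow3]
  have hpos : (0:ℝ) < (1/2:ℝ)^(3*ls) := by positivity
  have hls1 : (1:ℝ) ≤ (ls:ℝ) := by exact_mod_cast hls
  calc ∑' p : ℕ × ℕ, S.indicator f p ≤ (C * (1/2:ℝ)^(3*ls)) * ((∑' n : ℕ, (1/2:ℝ)^n) * ∑' n, h n) := by
        rw [← step2]; exact step1
    _ = (C * (1/2:ℝ)^(3*ls)) * (2 * ∑' n, h n) := by rw [hgeo_sum]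
    _ ≤ (C * (1/2:ℝ)^(3*ls)) * (2 * (2*(ls:ℝ) + 2)) := by
        have : (0:ℝ) ≤ C * (1/2:ℝ)^(3*ls) := by positivity
        apply mul_le_mul_of_nonneg_left _ this
        linarith
    _ ≤ 8 * C * (1/2:ℝ)^(3*ls) * (ls:ℝ) := by
        nlinarith [mul_nonneg (mul_pos hC hpos).le (by linarith : (0:ℝ) ≤ 4*(ls:ℝ) - 4)]
end
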